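/- arXiv:1408.5475 — 3 statements merged into one kernel-verified Lean document; each statement's English description precedes it below -/
import Mathlib

section
/- Let G be a tree. Then nu_0(G) >= nu(G) - 1, where nu(G) is the matching number and nu_0(G) is the maximum size of a restricted matching (set to 1 if no restricted matching exists). -/
open MvPolynomial

noncomputable section

abbrev SRing (K : Type) [Field K] (n : ℕ) := MvPolynomial (Fin n) K

def minGen {K : Type} [Field K] {n : ℕ} (J : Ideal (SRing K n)) : Set (Fin n →₀ ℕ) :=
  {e | (monomial e (1:K)) ∈ J ∧
    ∀ e' : Fin n →₀ ℕ, e' ≤ e → e' ≠ e → (monomial e' (1:K)) ∉ J}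

/-- a matching of a simple graph, recorded as a finite set of ordered pairs `(i,j)` with
`i < j`: edges of `G` that are pairwise disjoint -/
def IsMatching {n : ℕ} (G : SimpleGraph (Fin n)) (M : Finset (Fin n × Fin n)) : Prop :=
  (∀ p ∈ M, G.Adj p.1 p.2 ∧ p.1 < p.2) ∧
  ∀ p ∈ M, ∀ q ∈ M, p ≠ q →
    p.1 ≠ q.1 ∧ p.1 ≠ q.2 ∧ p.2 ≠ q.1 ∧ p.2 ≠ q.2

/-- the matching number `ν(G)` -/
def matchNum {n : ℕ} (G : SimpleGraph (Fin n)) : ℕ :=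
  sSup {k | ∃ M, IsMatching G M ∧ M.card = k}

/-- the edge `e` meets the edge `f` (as unordered pairs of vertices) -/
def meets {n : ℕ} (e f : Fin n × Fin n) : Prop :=
  e.1 = f.1 ∨ e.1 = f.2 ∨ e.2 = f.1 ∨ e.2 = f.2

/-- two (disjoint) edges form a gap in `G`: no edge of `G` meets both -/
def FormsGap {n : ℕ} (G : SimpleGraph (Fin n)) (e e' : Fin n × Fin n) : Prop :=
  ¬ ∃ a b, G.Adj a b ∧ meets (a, b) e ∧ meets (a, b) e'

/-- a restricted matching: a matching one of whose edges forms a gap with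
every other edge of the matching -/
def IsRestrictedMatching {n : ℕ} (G : SimpleGraph (Fin n)) (M : Finset (Fin n × Fin n)) : Prop :=
  IsMatching G M ∧ ∃ e ∈ M, ∀ e' ∈ M, e' ≠ e → FormsGap G e e'

/-- `ν₀(G)`: maximal size of a restricted matching, set to `1` if there is none -/
def resMatchNum {n : ℕ} (G : SimpleGraph (Fin n)) : ℕ :=
  max (sSup {k | ∃ M, IsRestrictedMatching G M ∧ M.card = k}) 1

/-- the `k`-th squarefree power `I(G)^{[k]}`: generated by the products of the
edges of the matchings of `G` of size `k` -/
def sqfreePower (K : Type) [Field K] {n : ℕ} (G : SimpleGraph (Fin n)) (k : ℕ) :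
    Ideal (SRing K n) :=
  Ideal.span {p | ∃ M : Finset (Fin n × Fin n), IsMatching G M ∧ M.card = k ∧
    p = ∏ q ∈ M, (X q.1 * X q.2)}

/-- a monomial ideal has linear quotients: for some ordering `u_1, …, u_t` of its minimal
monomial generators, each colon ideal `(u_1, …, u_{i-1}) : u_i` is generated by variables -/
def HasLinearQuotients {K : Type} [Field K] {n : ℕ} (J : Ideal (SRing K n)) : Prop :=
  ∃ (t : ℕ) (u : Fin t → (Fin n →₀ ℕ)), Function.Injective u ∧
    (∀ e, e ∈ minGen J ↔ ∃ i, u i = e) ∧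
    ∀ i : Fin t, ∃ V : Set (Fin n),
      Submodule.colon (Ideal.span ((fun j => (monomial (u j) (1:K))) '' {j | j < i}))
        (Ideal.span {monomial (u i) (1:K)}) =
      Ideal.span ((fun v => (X v : SRing K n)) '' V)

-- === auxiliary ===
set_option linter.unusedSectionVars false

open SimpleGraph

section TreeAux

variable {V : Type*} [DecidableEq V] {G : SimpleGraph V}

lemma isPath_concat' {u v w : V} {p : G.Walk u v} (hp : p.IsPath) (h : G.Adj v w)
    (hw : w ∉ p.support) : (p.concat h).IsPath := by
  rw [← Walk.isPath_reverse_iff, Walk.reverse_concat]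
  exact (hp.reverse).cons (by simpa using hw)

lemma dist_lt_of_mem_support {r u : V} {p : G.Walk r u} (hp : p.length = G.dist r u)
    {x : V} (hx : x ∈ p.support) (hxu : x ≠ u) : G.dist r x < G.dist r u := by
  have hs := p.take_spec hx
  have hlen : (p.takeUntil x hx).length + (p.dropUntil x hx).length = p.length := by
    conv_rhs => rw [← hs]
    rw [Walk.length_append]
  have h1 : G.dist r x ≤ (p.takeUntil x hx).length := SimpleGraph.dist_le _
  have h2 : (p.dropUntil x hx).length ≠ 0 := fun h => hxu (Walk.eq_of_length_eq_zero h)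
  omega

lemma adj_dist (hG : G.IsTree) (r : V) {u v : V} (h : G.Adj u v)
    (hle : G.dist r u ≤ G.dist r v) : G.dist r v = G.dist r u + 1 := by
  obtain ⟨p, hp⟩ := hG.isConnected.exists_walk_length_eq_dist r u
  have hub : G.dist r v ≤ G.dist r u + 1 := by
    have := SimpleGraph.dist_le (p.concat h)
    rwa [Walk.length_concat, hp] at this
  have hne : G.dist r v ≠ G.dist r u := by
    intro heq
    by_cases hv : v ∈ p.support
    · have := dist_lt_of_mem_support hp hv h.ne'
      omega
    · have hq : (p.concat h).IsPath := isPath_concat' (p.isPath_of_length_eq_dist hp) h hv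
      obtain ⟨p', hp'⟩ := hG.isConnected.exists_walk_length_eq_dist r v
      have hp'path := p'.isPath_of_length_eq_dist hp'
      have heqp := hG.IsAcyclic.path_unique ⟨p.concat h, hq⟩ ⟨p', hp'path⟩
      have heqw : p.concat h = p' := congrArg Subtype.val heqp
      have hl := congrArg Walk.length heqw
      rw [Walk.length_concat, hp, hp'] at hl
      omega
  omega

lemma parent_unique (hG : G.IsTree) (r : V) {v w w' : V} (h : G.Adj w v) (h' : G.Adj w' v)
    (hd : G.dist r w + 1 = G.dist r v) (hd' : G.dist r w' + 1 = G.dist r v) : w = w' := by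
  obtain ⟨p, hp⟩ := hG.isConnected.exists_walk_length_eq_dist r w
  obtain ⟨p', hp'⟩ := hG.isConnected.exists_walk_length_eq_dist r w'
  have hv : v ∉ p.support := by
    intro hv
    have := dist_lt_of_mem_support hp hv h.ne'
    omega
  have hv' : v ∉ p'.support := by
    intro hv'
    have := dist_lt_of_mem_support hp' hv' h'.ne'
    omega
  have hq := isPath_concat' (p.isPath_of_length_eq_dist hp) h hv
  have hq' := isPath_concat' (p'.isPath_of_length_eq_dist hp') h' hv'
  have heqp := hG.IsAcyclic.path_unique ⟨p.concat h, hq⟩ ⟨p'.concat h', hq'⟩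
  have heqw : p.concat h = p'.concat h' := congrArg Subtype.val heqp
  obtain ⟨hv, -⟩ := Walk.concat_inj heqw
  exact hv

end TreeAux

section MatchAux

variable {n : ℕ} {G : SimpleGraph (Fin n)}

/-- crossing edge extraction from a non-gap -/
lemma cross_aux {e e' : Fin n × Fin n} {a b : Fin n}
    (hab : G.Adj a b) (m1 : meets (a, b) e) (m2 : meets (a, b) e')
    (d1 : e.1 ≠ e'.1) (d2 : e.1 ≠ e'.2) (d3 : e.2 ≠ e'.1) (d4 : e.2 ≠ e'.2) :
    ∃ x y, (x = e.1 ∨ x = e.2) ∧ (y = e'.1 ∨ y = e'.2) ∧ G.Adj x y := by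
  have m1' : a = e.1 ∨ a = e.2 ∨ b = e.1 ∨ b = e.2 := m1
  have m2' : a = e'.1 ∨ a = e'.2 ∨ b = e'.1 ∨ b = e'.2 := m2
  rcases m1' with h1 | h1 | h1 | h1 <;> rcases m2' with h2 | h2 | h2 | h2
  · exact absurd (h1.symm.trans h2) d1
  · exact absurd (h1.symm.trans h2) d2
  · exact ⟨a, b, Or.inl h1, Or.inl h2, hab⟩
  · exact ⟨a, b, Or.inl h1, Or.inr h2, hab⟩
  · exact absurd (h1.symm.trans h2) d3
  · exact absurd (h1.symm.trans h2) d4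
  · exact ⟨a, b, Or.inr h1, Or.inl h2, hab⟩
  · exact ⟨a, b, Or.inr h1, Or.inr h2, hab⟩
  · exact ⟨b, a, Or.inl h1, Or.inl h2, hab.symm⟩
  · exact ⟨b, a, Or.inl h1, Or.inr h2, hab.symm⟩
  · exact absurd (h1.symm.trans h2) d1
  · exact absurd (h1.symm.trans h2) d2
  · exact ⟨b, a, Or.inr h1, Or.inl h2, hab.symm⟩
  · exact ⟨b, a, Or.inr h1, Or.inr h2, hab.symm⟩
  · exact absurd (h1.symm.trans h2) d3
  · exact absurd (h1.symm.trans h2) d4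

lemma endpoint_clash {M : Finset (Fin n × Fin n)} (hM : IsMatching G M)
    {p q : Fin n × Fin n} (hp : p ∈ M) (hq : q ∈ M) (hpq : p ≠ q) {x : Fin n}
    (hxp : x = p.1 ∨ x = p.2) (hxq : x = q.1 ∨ x = q.2) : False := by
  obtain ⟨d1, d2, d3, d4⟩ := hM.2 p hp q hq hpq
  rcases hxp with rfl | rfl <;> rcases hxq with h | h <;> tauto

/-- key structural lemma: in a tree, some matching edge conflicts with at most one other -/
lemma key_lemma (hG : G.IsTree) {M : Finset (Fin n × Fin n)} (hM : IsMatching G M)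
    (hne : M.Nonempty) :
    ∃ e ∈ M, ∀ e₁ ∈ M, e₁ ≠ e → ¬FormsGap G e e₁ →
      ∀ e₂ ∈ M, e₂ ≠ e → ¬FormsGap G e e₂ → e₁ = e₂ := by
  classical
  obtain ⟨e₀, he₀⟩ := hne
  set r : Fin n := e₀.1 with hr
  set S : Finset (Fin n) := M.image Prod.fst ∪ M.image Prod.snd with hSdef
  have hS : S.Nonempty := ⟨e₀.1, by
    simp only [hSdef, Finset.mem_union, Finset.mem_image]
    exact Or.inl ⟨e₀, he₀, rfl⟩⟩
  have memS : ∀ p ∈ M, ∀ x : Fin n, (x = p.1 ∨ x = p.2) → x ∈ S := by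
    intro p hp x hx
    simp only [hSdef, Finset.mem_union, Finset.mem_image]
    rcases hx with rfl | rfl
    · exact Or.inl ⟨p, hp, rfl⟩
    · exact Or.inr ⟨p, hp, rfl⟩
  obtain ⟨vm, hvmS, hvmax⟩ := S.exists_max_image (G.dist r) hS
  -- find the matching edge containing vm
  have : ∃ e ∈ M, vm = e.1 ∨ vm = e.2 := by
    simp only [hSdef, Finset.mem_union, Finset.mem_image] at hvmS
    rcases hvmS with ⟨p, hp, hpe⟩ | ⟨p, hp, hpe⟩
    · exact ⟨p, hp, Or.inl hpe.symm⟩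
    · exact ⟨p, hp, Or.inr hpe.symm⟩
  obtain ⟨e, he, hvm⟩ := this
  have hadj : G.Adj e.1 e.2 := (hM.1 e he).1
  -- order the endpoints of e by depth
  obtain ⟨u, v, huv, hadj', hd, hvmax'⟩ :
      ∃ u v : Fin n, ((u = e.1 ∧ v = e.2) ∨ (u = e.2 ∧ v = e.1)) ∧ G.Adj u v ∧
        G.dist r u + 1 = G.dist r v ∧ ∀ x ∈ S, G.dist r x ≤ G.dist r v := by
    rcases le_total (G.dist r e.1) (G.dist r e.2) with hle | hle
    · refine ⟨e.1, e.2, Or.inl ⟨rfl, rfl⟩, hadj, (adj_dist hG r hadj hle).symm, ?_⟩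
      intro x hx
      refine (hvmax x hx).trans ?_
      rcases hvm with h | h
      · rw [h]; exact hle
      · rw [h]
    · refine ⟨e.2, e.1, Or.inr ⟨rfl, rfl⟩, hadj.symm, (adj_dist hG r hadj.symm hle).symm, ?_⟩
      intro x hx
      refine (hvmax x hx).trans ?_
      rcases hvm with h | h
      · rw [h]
      · rw [h]; exact hle
  have hmemuv : ∀ x : Fin n, (x = u ∨ x = v) → (x = e.1 ∨ x = e.2) := by
    intro x hx; rcases huv with ⟨h1, h2⟩ | ⟨h1, h2⟩ <;> rcases hx with rfl | rfl <;> tauto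
  -- the claim: any conflicting edge contains the parent of u
  have claim : ∀ e' ∈ M, e' ≠ e → ¬FormsGap G e e' →
      ∃ y, (y = e'.1 ∨ y = e'.2) ∧ G.Adj y u ∧ G.dist r y + 1 = G.dist r u := by
    intro e' he' hnee' hng
    obtain ⟨a, b, hab, m1, m2⟩ := not_not.mp hng
    obtain ⟨d1, d2, d3, d4⟩ := hM.2 e he e' he' (Ne.symm hnee')
    obtain ⟨x, y, hx, hy, hxy⟩ := cross_aux hab m1 m2 d1 d2 d3 d4
    have hyS : y ∈ S := memS e' he' y hy
    have hyv : G.dist r y ≤ G.dist r v := hvmax' y hyS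
    have hx' : x = u ∨ x = v := by
      rcases huv with ⟨h1, h2⟩ | ⟨h1, h2⟩ <;> rw [h1, h2] <;> tauto
    rcases hx' with rfl | rfl
    · -- x = u
      rcases le_total (G.dist r y) (G.dist r x) with h1 | h1
      · exact ⟨y, hy, hxy.symm, (adj_dist hG r hxy.symm h1).symm⟩
      · have h2 : G.dist r y = G.dist r x + 1 := adj_dist hG r hxy h1
        obtain ⟨z, hz, hyz⟩ : ∃ z, (z = e'.1 ∨ z = e'.2) ∧ G.Adj y z := by
          rcases hy with rfl | rfl
          · exact ⟨e'.2, Or.inr rfl, (hM.1 e' he').1⟩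
          · exact ⟨e'.1, Or.inl rfl, ((hM.1 e' he').1).symm⟩
        have hzS : z ∈ S := memS e' he' z hz
        have hzle : G.dist r z ≤ G.dist r y := by
          have := hvmax' z hzS
          omega
        have h3 : G.dist r y = G.dist r z + 1 := adj_dist hG r hyz.symm hzle
        have hxz : x = z := parent_unique hG r hxy hyz.symm (by omega) (by omega)
        exact absurd (endpoint_clash hM he he' (Ne.symm hnee')
          (hmemuv x (Or.inl rfl)) (hxz ▸ hz)) not_false
    · -- x = v
      have h2 : G.dist r x = G.dist r y + 1 := adj_dist hG r hxy.symm hyv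
      have huy : u = y := parent_unique hG r hadj' hxy.symm hd (by omega)
      exact absurd (endpoint_clash hM he he' (Ne.symm hnee')
        (hmemuv u (Or.inl rfl)) (huy ▸ hy)) not_false
  refine ⟨e, he, ?_⟩
  intro e₁ he₁ hne₁ hng₁ e₂ he₂ hne₂ hng₂
  obtain ⟨y₁, hy₁, ha₁, hd₁⟩ := claim e₁ he₁ hne₁ hng₁
  obtain ⟨y₂, hy₂, ha₂, hd₂⟩ := claim e₂ he₂ hne₂ hng₂
  have hy12 : y₁ = y₂ := parent_unique hG r ha₁ ha₂ hd₁ hd₂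
  by_contra hne12
  exact endpoint_clash hM he₁ he₂ hne12 hy₁ (hy12 ▸ hy₂)

end MatchAux


/-- For a tree `G` one has `ν₀(G) ≥ ν(G) - 1`. -/
theorem stmt14 (n : ℕ) (G : SimpleGraph (Fin n)) (hG : G.IsTree) :
    matchNum G - 1 ≤ resMatchNum G := by
  classical
  have hbdd : BddAbove {k | ∃ M, IsMatching G M ∧ M.card = k} :=
    ⟨Fintype.card (Fin n × Fin n), fun k ⟨M, _, hc⟩ => hc ▸ M.card_le_univ⟩
  have hbdd₀ : BddAbove {k | ∃ M, IsRestrictedMatching G M ∧ M.card = k} :=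
    ⟨Fintype.card (Fin n × Fin n), fun k ⟨M, _, hc⟩ => hc ▸ M.card_le_univ⟩
  have hne : {k | ∃ M, IsMatching G M ∧ M.card = k}.Nonempty :=
    ⟨0, ∅, ⟨fun p hp => absurd hp (Finset.notMem_empty p),
      fun p hp => absurd hp (Finset.notMem_empty p)⟩, Finset.card_empty⟩
  have hmem : ∀ k ∈ {k | ∃ M, IsRestrictedMatching G M ∧ M.card = k}, k ≤ resMatchNum G :=
    fun k hk => (le_csSup hbdd₀ hk).trans (le_max_left _ _)
  by_cases hzero : matchNum G = 0
  · rw [hzero]; exact Nat.zero_le _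
  obtain ⟨M, hM, hcard⟩ : ∃ M, IsMatching G M ∧ M.card = matchNum G :=
    Nat.sSup_mem hne hbdd
  have hMne : M.Nonempty := Finset.card_pos.mp (by omega)
  obtain ⟨e, he, huniq⟩ := key_lemma hG hM hMne
  by_cases hall : ∀ e' ∈ M, e' ≠ e → FormsGap G e e'
  · have hk : matchNum G ∈ {k | ∃ M, IsRestrictedMatching G M ∧ M.card = k} :=
      ⟨M, ⟨hM, e, he, hall⟩, hcard⟩
    exact (Nat.sub_le _ 1).trans (hmem _ hk)
  · push_neg at hall
    obtain ⟨e', he', hne', hng⟩ := hall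
    have hM' : IsMatching G (M.erase e') :=
      ⟨fun p hp => hM.1 p (Finset.mem_of_mem_erase hp),
       fun p hp q hq h => hM.2 p (Finset.mem_of_mem_erase hp) q (Finset.mem_of_mem_erase hq) h⟩
    have heM' : e ∈ M.erase e' := Finset.mem_erase.mpr ⟨Ne.symm hne', he⟩
    have hrest : IsRestrictedMatching G (M.erase e') := by
      refine ⟨hM', e, heM', ?_⟩
      intro e'' he'' hne''
      by_contra hng''
      have := huniq e'' (Finset.mem_of_mem_erase he'') hne'' hng'' e' he' hne' hng
      exact (Finset.ne_of_mem_erase he'') this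
    have hk : matchNum G - 1 ∈ {k | ∃ M, IsRestrictedMatching G M ∧ M.card = k} :=
      ⟨M.erase e', hrest, by rw [Finset.card_erase_of_mem he', hcard]⟩
    exact hmem _ hk


end
end

section
/- Let C_n be the cycle of even length n > 3 with edge ideal I. Then the minimal generators of the (n/2 - 1)-st squarefree power I^{[n/2-1]} are exactly the monomials (x_1 x_2 ... x_n)/(x_r x_s) with 1 <= r < s <= n and s - r odd. -/
/-!
The minimal generators of `I(G)^{[k]}` are exactly the exponent vectors of the matchings of size
`k`, because all of them have the same degree `2k`. For `n = 2m`, a matching of size `m - 1` of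
`C_n` misses exactly two vertices `r < s`. Weighting vertex `t` by `(-1)^t`, every edge of the
even cycle has weight `0`, and so has the whole vertex set; hence `(-1)^r + (-1)^s = 0`, that is,
`s - r` is odd. Conversely, if `s - r` is odd, both arcs of `C_n - {r, s}` have an even number of
vertices and are matched by consecutive pairs.
-/

open MvPolynomial

noncomputable section

/-- total degree of an exponent vector -/
def mdeg {n : ℕ} (e : Fin n →₀ ℕ) : ℕ := e.sum fun _ v => v

/-- adjacency in the graph `G_J^{(u,v)}` : vertices are the minimal generators of `J`
dividing `lcm(u,v)`, with an edge between two of them iff their lcm has degree `d+1` -/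
def lcmGraphAdj {K : Type} [Field K] {n : ℕ} (J : Ideal (SRing K n)) (d : ℕ)
    (u v : Fin n →₀ ℕ) (w w' : Fin n →₀ ℕ) : Prop :=
  w ∈ minGen J ∧ w' ∈ minGen J ∧ w ≤ u ⊔ v ∧ w' ≤ u ⊔ v ∧ mdeg (w ⊔ w') = d + 1

/-- a graded partial free resolution of the ideal `I`, exact at homological positions `< r`:
`F_i` is free with basis in (internal) degrees `dg i`, the maps are graded of degree `0`,
`F_0` surjects onto `I`, and the sequence is exact at `F_i` for `i < r`. -/
structure GradedPartialRes {K : Type} [Field K] {n : ℕ} (I : Ideal (SRing K n)) (r : ℕ∞) where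
  s : ℕ → ℕ
  dg : ∀ i, Fin (s i) → ℕ
  aug : (Fin (s 0) →₀ SRing K n) →ₗ[SRing K n] SRing K n
  diff : ∀ i, (Fin (s (i+1)) →₀ SRing K n) →ₗ[SRing K n] (Fin (s i) →₀ SRing K n)
  aug_hom : ∀ k, (aug (Finsupp.single k 1)).IsHomogeneous (dg 0 k)
  diff_hom : ∀ i k l, (diff i (Finsupp.single k 1)) l = 0 ∨
      ∃ m, ((diff i (Finsupp.single k 1)) l).IsHomogeneous m ∧ dg i l + m = dg (i+1) k
  aug_range : LinearMap.range aug = I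
  exact_zero : (0 : ℕ∞) < r → LinearMap.range (diff 0) = LinearMap.ker aug
  exact_succ : ∀ i : ℕ, ((i : ℕ∞) + 1) < r →
      LinearMap.range (diff (i+1)) = LinearMap.ker (diff i)

/-- the graded Betti number `β_{i,j}(I)`: the minimal number of degree-`j` basis elements
in homological position `i`, over all graded partial resolutions of `I` exact at
positions `0, …, i` (the minimum is attained by the minimal graded free resolution). -/
def gradedBetti {K : Type} [Field K] {n : ℕ} (I : Ideal (SRing K n)) (i j : ℕ) : ℕ∞ :=
  ⨅ R : GradedPartialRes I ((i : ℕ∞)+1),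
    ((Finset.univ.filter fun k => R.dg i k = j).card : ℕ∞)

/-- `I` (generated in degree `d`) is `r` steps linear: `β_{i,i+j}(I) = 0` for
all `i ≤ r` and `j > d` -/
def stepsLinear {K : Type} [Field K] {n : ℕ} (I : Ideal (SRing K n)) (d r : ℕ) : Prop :=
  ∀ i ≤ r, ∀ j, d < j → gradedBetti I i (i+j) = 0

/-- `index(I) = sup{r : I is r steps linear} + 1` -/
def idealIndex {K : Type} [Field K] {n : ℕ} (I : Ideal (SRing K n)) (d : ℕ) : ℕ∞ :=
  sSup {x : ℕ∞ | ∃ r : ℕ, x = (r : ℕ∞) + 1 ∧ stepsLinear I d r}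

/-- `I` is linearly related: all first syzygies are linear, i.e. `index(I) > 1` -/
def LinearlyRelated {K : Type} [Field K] {n : ℕ} (I : Ideal (SRing K n)) (d : ℕ) : Prop :=
  stepsLinear I d 1

/-- projective dimension of `I`: the minimal length of a graded free resolution of `I` -/
def projDim {K : Type} [Field K] {n : ℕ} (I : Ideal (SRing K n)) : ℕ∞ :=
  sInf {x : ℕ∞ | ∃ m : ℕ, x = (m : ℕ∞) ∧
    ∃ R : GradedPartialRes I ⊤, ∀ i : ℕ, m < i → R.s i = 0}

/-- the edge ideal of the graph (possibly with loops) given by a symmetric relation `E`: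
generated by the monomials `X i * X j` with `E i j` -/
def edgeIdeal (K : Type) [Field K] {n : ℕ} (E : Fin n → Fin n → Prop) : Ideal (SRing K n) :=
  Ideal.span {p | ∃ i j, E i j ∧ p = X i * X j}

/-- `E` is gap free: for any two disjoint edges there is an edge meeting both -/
def GapFree {n : ℕ} (E : Fin n → Fin n → Prop) : Prop :=
  ∀ i i' j j', E i i' → E j j' → i ≠ j → i ≠ j' → i' ≠ j → i' ≠ j' →
    ∃ a b, E a b ∧ (a = i ∨ a = i') ∧ (b = j ∨ b = j')

/-- the cycle graph of length `n` on `Fin n`: edges `{i, i+1}` and `{0, n-1}` -/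
def cycleG (n : ℕ) : SimpleGraph (Fin n) where
  Adj i j := i ≠ j ∧ ((i:ℕ)+1 = j ∨ (j:ℕ)+1 = i ∨ ((i:ℕ) = 0 ∧ (j:ℕ) = n-1) ∨
    ((j:ℕ) = 0 ∧ (i:ℕ) = n-1))
  symm := by
    constructor
    intro i j h
    exact ⟨h.1.symm, by tauto⟩
  loopless := by constructor; intro i h; exact h.1 rfl

section MatchingExponent

variable {σ : Type*}

def matchingExp (M : Finset (σ × σ)) : σ →₀ ℕ :=
  ∑ q ∈ M, (Finsupp.single q.1 1 + Finsupp.single q.2 1)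

lemma prod_X_mul_X_eq_monomial {R : Type*} [CommSemiring R] (M : Finset (σ × σ)) :
    ∏ q ∈ M, (X q.1 * X q.2 : MvPolynomial σ R) = monomial (matchingExp M) 1 := by
  simp only [matchingExp, monomial_sum_one, X, monomial_mul, mul_one]

lemma matchingExp_ne_zero_iff (M : Finset (σ × σ)) (t : σ) :
    matchingExp M t ≠ 0 ↔ ∃ q ∈ M, q.1 = t ∨ q.2 = t := by
  classical
  simp [matchingExp, Finsupp.finsetSum_apply, Finsupp.single_apply, or_iff_not_imp_left]

lemma sum_matchingExp_smul [Fintype σ] {A : Type*} [AddCommMonoid A] (M : Finset (σ × σ))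
    (w : σ → A) : ∑ t, matchingExp M t • w t = ∑ q ∈ M, (w q.1 + w q.2) := by
  classical
  simp only [matchingExp, Finsupp.finsetSum_apply, Finset.sum_smul]
  rw [Finset.sum_comm]
  refine Finset.sum_congr rfl fun q _ => ?_
  simp [add_smul, Finset.sum_add_distrib, Finsupp.single_apply, ite_smul]

lemma sum_matchingExp [Fintype σ] (M : Finset (σ × σ)) :
    ∑ t, matchingExp M t = 2 * M.card := by
  have h := sum_matchingExp_smul M (fun _ => (1 : ℕ))
  simp only [smul_eq_mul, mul_one, Finset.sum_const] at h
  omega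

end MatchingExponent

lemma Finsupp.degree_lt_degree {σ : Type*} {f g : σ →₀ ℕ} (h : f < g) : f.degree < g.degree := by
  obtain ⟨d, rfl⟩ := exists_add_of_le h.le
  have hd : d ≠ 0 := by rintro rfl; simp at h
  simpa [map_add, pos_iff_ne_zero, Finsupp.degree_eq_zero_iff] using hd

section Matching

variable {n : ℕ} {G : SimpleGraph (Fin n)} {M : Finset (Fin n × Fin n)}

lemma IsMatching.eq_of_mem_of_mem (hM : IsMatching G M) {q q' : Fin n × Fin n} (hq : q ∈ M)
    (hq' : q' ∈ M) {t : Fin n} (ht : q.1 = t ∨ q.2 = t) (ht' : q'.1 = t ∨ q'.2 = t) :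
    q = q' := by
  by_contra hne
  have := hM.2 q hq q' hq' hne
  rcases ht with rfl | rfl <;> rcases ht' with h | h <;> simp_all

lemma IsMatching.matchingExp_le_one (hM : IsMatching G M) (t : Fin n) :
    matchingExp M t ≤ 1 := by
  classical
  set touches : Finset (Fin n × Fin n) := M.filter fun q => q.1 = t ∨ q.2 = t
  have h_term : ∀ q ∈ M, (Finsupp.single q.1 1 + Finsupp.single q.2 1 : Fin n →₀ ℕ) t ≤ 1 := by
    intro q hq
    have := (hM.1 q hq).2.ne
    simp only [Finsupp.add_apply, Finsupp.single_apply]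
    split_ifs <;> simp_all
  have h_touches : touches.card ≤ 1 := Finset.card_le_one.2 fun q hq q' hq' => by
    simp only [touches, Finset.mem_filter] at hq hq'
    exact hM.eq_of_mem_of_mem hq.1 hq'.1 hq.2 hq'.2
  calc matchingExp M t
      = ∑ q ∈ touches, (Finsupp.single q.1 1 + Finsupp.single q.2 1 : Fin n →₀ ℕ) t := by
        rw [matchingExp, Finsupp.finsetSum_apply, Finset.sum_filter_of_ne]
        intro q _ hq
        simpa [Finsupp.single_apply, or_iff_not_imp_left] using hq
    _ ≤ touches.card • 1 :=
        Finset.sum_le_card_nsmul _ _ _ fun q hq => h_term q (Finset.mem_filter.1 hq).1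
    _ ≤ 1 := by simpa using h_touches

end Matching

lemma monomial_mem_sqfreePower_iff {K : Type} [Field K] {n : ℕ} (G : SimpleGraph (Fin n))
    (k : ℕ) (e : Fin n →₀ ℕ) :
    monomial e (1 : K) ∈ sqfreePower K G k ↔
      ∃ M, IsMatching G M ∧ M.card = k ∧ matchingExp M ≤ e := by
  have h_gens : {p | ∃ M : Finset (Fin n × Fin n), IsMatching G M ∧ M.card = k ∧
      p = ∏ q ∈ M, (X q.1 * X q.2 : SRing K n)} =
      (fun d => monomial d (1 : K)) '' (matchingExp '' {M | IsMatching G M ∧ M.card = k}) := by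
    ext p
    simp [prod_X_mul_X_eq_monomial, eq_comm, and_assoc]
  rw [sqfreePower, h_gens, mem_ideal_span_monomial_image]
  simp [and_assoc]

theorem mem_minGen_sqfreePower_iff {K : Type} [Field K] {n : ℕ} (G : SimpleGraph (Fin n))
    (k : ℕ) (e : Fin n →₀ ℕ) :
    e ∈ minGen (sqfreePower K G k) ↔ ∃ M, IsMatching G M ∧ M.card = k ∧ matchingExp M = e := by
  simp only [minGen, Set.mem_ofPred_eq, monomial_mem_sqfreePower_iff]
  constructor
  · rintro ⟨⟨M, hM, hk, hle⟩, hmin⟩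
    by_contra! hne
    exact hmin _ hle (hne M hM hk) ⟨M, hM, hk, le_rfl⟩
  · rintro ⟨M, hM, hk, rfl⟩
    refine ⟨⟨M, hM, hk, le_rfl⟩, fun e' hle hne ⟨M', hM', hk', hle'⟩ => ?_⟩
    have h_lt := Finsupp.degree_lt_degree (lt_of_le_of_lt hle' (lt_of_le_of_ne hle hne))
    simp only [Finsupp.degree_eq_sum, sum_matchingExp, hk, hk'] at h_lt
    exact lt_irrefl _ h_lt

lemma sum_ite_eq_or_eq_add {σ A : Type*} [Fintype σ] [DecidableEq σ] [AddCommMonoid A]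
    {r s : σ} (hrs : r ≠ s) (w : σ → A) :
    ∑ t, (if t = r ∨ t = s then 0 else w t) + (w r + w s) = ∑ t, w t := by
  have h_compl : Finset.univ.filter (fun t => ¬(t = r ∨ t = s)) = {r, s}ᶜ := by ext; simp
  rw [Finset.sum_ite, Finset.sum_const_zero, zero_add, h_compl, ← Finset.sum_pair hrs,
    Finset.sum_compl_add_sum]

lemma exists_eq_ite_of_sum_eq_card_sub_two {σ : Type*} [Fintype σ] [DecidableEq σ]
    {f : σ → ℕ} (hf : ∀ t, f t ≤ 1) (hsum : ∑ t, f t = Fintype.card σ - 2)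
    (hcard : 2 ≤ Fintype.card σ) :
    ∃ r s, r ≠ s ∧ ∀ t, f t = if t = r ∨ t = s then 0 else 1 := by
  have h_ite : ∀ t, f t = if f t = 0 then 0 else 1 := fun t => by
    have := hf t; split_ifs <;> omega
  have h_zeros : (Finset.univ.filter fun t => f t = 0).card = 2 := by
    have h := Finset.card_filter_add_card_filter_not (s := Finset.univ) fun t => f t = 0
    rw [Finset.sum_congr rfl fun t _ => h_ite t, Finset.sum_ite, Finset.sum_const_zero,
      Finset.sum_const, smul_eq_mul, mul_one, zero_add] at hsum
    rw [Finset.card_univ] at h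
    omega
  obtain ⟨r, s, hrs, h_eq⟩ := Finset.card_eq_two.1 h_zeros
  refine ⟨r, s, hrs, fun t => ?_⟩
  have h_zero := Finset.ext_iff.1 h_eq t
  simp only [Finset.mem_filter, Finset.mem_univ, true_and, Finset.mem_insert,
    Finset.mem_singleton] at h_zero
  by_cases h : t = r ∨ t = s
  · rw [if_pos h]; exact h_zero.2 h
  · rw [if_neg h]; have := hf t; have := mt h_zero.1 h; omega

lemma sum_neg_one_pow_fin {n : ℕ} (hev : Even n) : ∑ t : Fin n, (-1 : ℤ) ^ (t : ℕ) = 0 := by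
  have h := geom_sum_mul (-1 : ℤ) n
  rw [hev.neg_one_pow, sub_self, mul_eq_zero] at h
  rw [Fin.sum_univ_eq_sum_range (fun t => (-1 : ℤ) ^ t)]
  exact h.resolve_right (by norm_num)

lemma neg_one_pow_add_neg_one_pow_of_cycleG_adj {n : ℕ} (hev : Even n) {i j : Fin n}
    (h : (cycleG n).Adj i j) : (-1 : ℤ) ^ (i : ℕ) + (-1) ^ (j : ℕ) = 0 := by
  have h_odd : Odd (n - 1) := Nat.Even.sub_odd (by have := i.isLt; omega) hev odd_one
  obtain ⟨-, h | h | ⟨hi, hj⟩ | ⟨hj, hi⟩⟩ := h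
  · rw [← h, pow_succ]; ring
  · rw [← h, pow_succ]; ring
  · rw [hi, hj, h_odd.neg_one_pow]; norm_num
  · rw [hi, hj, h_odd.neg_one_pow]; norm_num

lemma odd_sub_of_neg_one_pow_add_eq_zero {r s : ℕ} (hrs : r ≤ s)
    (h : (-1 : ℤ) ^ r + (-1) ^ s = 0) : Odd (s - r) := by
  rcases Nat.even_or_odd r with hr | hr <;> rcases Nat.even_or_odd s with hs | hs <;>
    simp only [hr.neg_one_pow, hs.neg_one_pow] at h <;> norm_num at h
  · exact Nat.Odd.sub_even hrs hs hr
  · exact Nat.Even.sub_odd hrs hs hr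

lemma exists_pair_of_isMatching_cycleG {n : ℕ} (hn : 2 ≤ n) (hev : Even n)
    {M : Finset (Fin n × Fin n)} (hM : IsMatching (cycleG n) M) (hc : M.card = n / 2 - 1) :
    ∃ r s : Fin n, r < s ∧ Odd ((s : ℕ) - (r : ℕ)) ∧
      ∀ t, matchingExp M t = if t = r ∨ t = s then 0 else 1 := by
  have h_sum : ∑ t, matchingExp M t = Fintype.card (Fin n) - 2 := by
    rw [sum_matchingExp, hc, Fintype.card_fin]
    obtain ⟨m, rfl⟩ := hev
    omega
  obtain ⟨r, s, hrs, h_exp⟩ :=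
    exists_eq_ite_of_sum_eq_card_sub_two hM.matchingExp_le_one h_sum (by simpa)
  wlog hlt : r < s generalizing r s
  · exact this s r hrs.symm (fun t => by simp only [h_exp, or_comm])
      (lt_of_le_of_ne (not_lt.1 hlt) hrs.symm)
  refine ⟨r, s, hlt, odd_sub_of_neg_one_pow_add_eq_zero hlt.le ?_, h_exp⟩
  have h_edges := sum_matchingExp_smul M fun t => (-1 : ℤ) ^ (t : ℕ)
  rw [Finset.sum_eq_zero fun q hq =>
    neg_one_pow_add_neg_one_pow_of_cycleG_adj hev (hM.1 q hq).1] at h_edges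
  have h_all := sum_ite_eq_or_eq_add hrs fun t : Fin n => (-1 : ℤ) ^ (t : ℕ)
  simp only [h_exp, ite_smul, zero_smul, one_smul] at h_edges
  rwa [h_edges, zero_add, sum_neg_one_pow_fin hev] at h_all

/-- The arc `r+1, …, s-1` is matched as `{r+1, r+2}, {r+3, r+4}, …` and the arc
`s+1, …, n-1, 0, …, r-1` as `{s+1, s+2}, …`; the latter passes through the edge `{0, n-1}`
exactly when `s` is even. -/
def cycleMatchingAvoiding (n : ℕ) (r s : Fin n) : Finset (Fin n × Fin n) :=
  Finset.univ.filter fun p =>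
    ((p.2 : ℕ) = p.1 + 1 ∧
      ((r < p.1 ∧ p.2 < s ∧ (p.1 + r : ℕ) % 2 = 1) ∨
        ((p.2 < r ∨ s < p.1) ∧ (p.1 + s : ℕ) % 2 = 1))) ∨
    ((p.1 : ℕ) = 0 ∧ (p.2 : ℕ) = n - 1 ∧ (s : ℕ) % 2 = 0)

section CycleMatchingAvoiding

variable {n : ℕ} {r s : Fin n}

lemma isMatching_cycleMatchingAvoiding (hev : Even n) :
    IsMatching (cycleG n) (cycleMatchingAvoiding n r s) := by
  obtain ⟨m, rfl⟩ := hev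
  simp only [IsMatching, cycleMatchingAvoiding, Finset.mem_filter, Finset.mem_univ, true_and,
    cycleG, ne_eq, Fin.lt_def, Fin.ext_iff, Prod.ext_iff]
  constructor
  · intro p hp
    omega
  · intro p hp q hq hpq
    omega

lemma exists_mem_cycleMatchingAvoiding_iff (hev : Even n) (hrs : r < s)
    (hodd : Odd ((s : ℕ) - r)) (t : Fin n) :
    (∃ q ∈ cycleMatchingAvoiding n r s, q.1 = t ∨ q.2 = t) ↔ ¬(t = r ∨ t = s) := by
  obtain ⟨m, rfl⟩ := hev
  rw [Fin.lt_def] at hrs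
  rw [Nat.odd_iff] at hodd
  have ht := t.isLt
  simp only [cycleMatchingAvoiding, Finset.mem_filter, Finset.mem_univ, true_and, Fin.lt_def,
    Fin.ext_iff]
  constructor
  · rintro ⟨q, hq, hqt⟩
    omega
  · intro h
    by_cases h_fwd : (r < (t : ℕ) ∧ (t : ℕ) < s ∧ (t + r : ℕ) % 2 = 1) ∨
        (((t : ℕ) < r ∨ s < (t : ℕ)) ∧ (t + s : ℕ) % 2 = 1)
    · by_cases h_last : (t : ℕ) + 1 < m + m
      · exact ⟨(t, ⟨t + 1, h_last⟩), by dsimp only; omega⟩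
      · exact ⟨(⟨0, by omega⟩, t), by dsimp only; omega⟩
    · by_cases h_first : 0 < (t : ℕ)
      · exact ⟨(⟨t - 1, by omega⟩, t), by dsimp only; omega⟩
      · exact ⟨(t, ⟨m + m - 1, by omega⟩), by dsimp only; omega⟩

lemma matchingExp_cycleMatchingAvoiding (hev : Even n) (hrs : r < s) (hodd : Odd ((s : ℕ) - r))
    (t : Fin n) : matchingExp (cycleMatchingAvoiding n r s) t = if t = r ∨ t = s then 0 else 1 := by
  have h_le : matchingExp (cycleMatchingAvoiding n r s) t ≤ 1 :=
    (isMatching_cycleMatchingAvoiding hev).matchingExp_le_one t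
  have h_ne := (matchingExp_ne_zero_iff _ t).trans
    (exists_mem_cycleMatchingAvoiding_iff hev hrs hodd t)
  by_cases h : t = r ∨ t = s
  · rw [if_pos h]
    by_contra h'
    exact h_ne.1 h' h
  · rw [if_neg h]
    have := h_ne.2 h
    omega

lemma card_cycleMatchingAvoiding (hev : Even n) (hrs : r < s) (hodd : Odd ((s : ℕ) - r)) :
    (cycleMatchingAvoiding n r s).card = n / 2 - 1 := by
  have h := sum_ite_eq_or_eq_add hrs.ne fun _ : Fin n => 1
  simp only [← matchingExp_cycleMatchingAvoiding hev hrs hodd, sum_matchingExp,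
    Finset.sum_const, Finset.card_univ, Fintype.card_fin, smul_eq_mul, mul_one] at h
  omega

end CycleMatchingAvoiding

/-- **Lemma.** For the even cycle `C_n` (`n > 3`), the minimal generators of the
squarefree power `I^{[n/2-1]}` are exactly the monomials `(x_0 ⋯ x_{n-1})/(x_r x_s)`
with `r < s` and `s - r` odd. -/
theorem stmt16 (K : Type) [Field K] (n : ℕ) (hn : 3 < n) (hev : Even n) :
    ∀ e : Fin n →₀ ℕ,
      e ∈ minGen (sqfreePower K (cycleG n) (n / 2 - 1)) ↔
        ∃ r s : Fin n, r < s ∧ Odd ((s : ℕ) - (r : ℕ)) ∧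
          ∀ t : Fin n, e t = if t = r ∨ t = s then 0 else 1 := by
  intro e
  rw [mem_minGen_sqfreePower_iff]
  constructor
  · rintro ⟨M, hM, hc, rfl⟩
    exact exists_pair_of_isMatching_cycleG (by omega) hev hM hc
  · rintro ⟨r, s, hrs, hodd, he⟩
    refine ⟨_, isMatching_cycleMatchingAvoiding hev, card_cycleMatchingAvoiding hev hrs hodd, ?_⟩
    ext t
    rw [matchingExp_cycleMatchingAvoiding hev hrs hodd, he]

end
end

section
/- Let C_n be a cycle of length n > 3 with vertices 1,...,n and edges {i,i+1}, {1,n}. Then the matching number satisfies nu(C_n) = floor(n/2), and the maximum size of a restricted matching satisfies nu_0(C_n) = floor(n/2) - 1 for n >= 6 (and nu_0(C_4) = nu_0(C_5) = 1). -/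
open MvPolynomial

noncomputable section

/-!
A matching covers `2|M|` vertices, so `ν(C_n) ≤ ⌊n/2⌋`, and the consecutive pairs
`{1,2}, {3,4}, …` attain it. In a restricted matching with distinguished edge `e = {a, b}`, the
other edges avoid not only `a` and `b` but, by the gap condition, every neighbour of `a` or `b`;
on `C_n` these are four distinct vertices, so `2(|M| - 1) + 4 ≤ n`. The matching
`{1,2}, {4,5}, {6,7}, …` (leaving out `3` and `n`) attains this bound, so
`ν₀(C_n) = max (⌊n/2⌋ - 1) 1` for `n ≥ 4`.
-/

lemma cycleG_adj {n : ℕ} {x y : Fin n} :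
    (cycleG n).Adj x y ↔ (x : ℕ) ≠ y ∧ ((x : ℕ) + 1 = y ∨ (y : ℕ) + 1 = x ∨
      ((x : ℕ) = 0 ∧ (y : ℕ) = n - 1) ∨ ((y : ℕ) = 0 ∧ (x : ℕ) = n - 1)) := by
  simp [cycleG, Fin.ext_iff]

section Matching

variable {n : ℕ} {G : SimpleGraph (Fin n)} {M : Finset (Fin n × Fin n)}

def matchedVerts (M : Finset (Fin n × Fin n)) : Finset (Fin n) :=
  M.biUnion fun p => {p.1, p.2}

lemma mem_matchedVerts {v : Fin n} : v ∈ matchedVerts M ↔ ∃ p ∈ M, v = p.1 ∨ v = p.2 := by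
  simp [matchedVerts]

lemma IsMatching.mono {M' : Finset (Fin n × Fin n)} (hM : IsMatching G M) (h : M' ⊆ M) :
    IsMatching G M' :=
  ⟨fun p hp => hM.1 p (h hp), fun p hp q hq => hM.2 p (h hp) q (h hq)⟩

lemma IsMatching.insert {e : Fin n × Fin n} (hM : IsMatching G M) (hadj : G.Adj e.1 e.2)
    (hlt : e.1 < e.2) (hdisj : ∀ p ∈ M, e.1 ≠ p.1 ∧ e.1 ≠ p.2 ∧ e.2 ≠ p.1 ∧ e.2 ≠ p.2) :
    IsMatching G (insert e M) := by
  refine ⟨fun p hp => ?_, fun p hp q hq hpq => ?_⟩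
  · rcases Finset.mem_insert.mp hp with rfl | hp
    exacts [⟨hadj, hlt⟩, hM.1 p hp]
  · rcases Finset.mem_insert.mp hp with hpe | hpM <;>
      rcases Finset.mem_insert.mp hq with hqe | hqM
    · exact absurd (hpe.trans hqe.symm) hpq
    · exact hpe ▸ hdisj q hqM
    · obtain ⟨h1, h2, h3, h4⟩ := hqe ▸ hdisj p hpM
      exact ⟨h1.symm, h3.symm, h2.symm, h4.symm⟩
    · exact hM.2 p hpM q hqM hpq

lemma IsMatching.card_matchedVerts (hM : IsMatching G M) :
    (matchedVerts M).card = 2 * M.card := by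
  rw [matchedVerts, Finset.card_biUnion, Finset.sum_congr rfl fun p hp =>
    Finset.card_pair (hM.1 p hp).2.ne, Finset.sum_const, smul_eq_mul, mul_comm]
  intro p hp q hq hpq
  obtain ⟨h1, h2, h3, h4⟩ := hM.2 p hp q hq hpq
  simp only [Finset.disjoint_insert_left, Finset.disjoint_insert_right,
    Finset.disjoint_singleton, Finset.mem_insert, Finset.mem_singleton]
  tauto

lemma IsMatching.two_mul_card_le (hM : IsMatching G M) : 2 * M.card ≤ n := by
  simpa [hM.card_matchedVerts] using (matchedVerts M).card_le_univ

lemma FormsGap.not_adj {e p : Fin n × Fin n} (h : FormsGap G e p) {v w : Fin n}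
    (hv : v = p.1 ∨ v = p.2) (hw : w = e.1 ∨ w = e.2) : ¬ G.Adj v w :=
  fun hadj => h ⟨v, w, hadj, by simp only [meets]; tauto, by simp only [meets]; tauto⟩

lemma IsMatching.two_mul_card_sub_one_add_card_le_of_formsGap {e : Fin n × Fin n}
    (hM : IsMatching G M) (he : e ∈ M) (hgap : ∀ p ∈ M, p ≠ e → FormsGap G e p)
    {T : Finset (Fin n)} (hT : ∀ v ∈ T, v = e.1 ∨ v = e.2 ∨ G.Adj v e.1 ∨ G.Adj v e.2) :
    2 * (M.card - 1) + T.card ≤ n := by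
  have hdisj : Disjoint (matchedVerts (M.erase e)) T := by
    refine Finset.disjoint_left.mpr fun v hv hvT => ?_
    obtain ⟨p, hp, hvp⟩ := mem_matchedVerts.mp hv
    obtain ⟨hpe, hpM⟩ := Finset.mem_erase.mp hp
    obtain ⟨h1, h2, h3, h4⟩ := hM.2 p hpM e he hpe
    have hgap := hgap p hpM hpe
    rcases hT v hvT with rfl | rfl | hadj | hadj
    · rcases hvp with h | h <;> simp_all
    · rcases hvp with h | h <;> simp_all
    · exact hgap.not_adj hvp (Or.inl rfl) hadj
    · exact hgap.not_adj hvp (Or.inr rfl) hadj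
  have hcard := (Finset.card_union_of_disjoint hdisj).symm.trans_le
    (Finset.card_le_univ (matchedVerts (M.erase e) ∪ T))
  rwa [(hM.mono (M.erase_subset e)).card_matchedVerts, Finset.card_erase_of_mem he,
    Fintype.card_fin] at hcard

end Matching

section Cycle

variable {n : ℕ}

lemma cycleG_exists_four_near_edge (hn : 4 ≤ n) {a b : Fin n} (hadj : (cycleG n).Adj a b)
    (hab : a < b) : ∃ T : Finset (Fin n), T.card = 4 ∧
      ∀ v ∈ T, v = a ∨ v = b ∨ (cycleG n).Adj v a ∨ (cycleG n).Adj v b := by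
  rw [cycleG_adj] at hadj
  have hab' : (a : ℕ) < b := hab
  -- `a'` and `b'` are the neighbours of `a` and `b` away from the edge `{a, b}`
  let a' : Fin n := ⟨if (a : ℕ) + 1 = b then (if (a : ℕ) = 0 then n - 1 else a - 1) else a + 1,
    by split_ifs <;> omega⟩
  let b' : Fin n := ⟨if (a : ℕ) + 1 = b then (if (b : ℕ) = n - 1 then 0 else b + 1) else b - 1,
    by split_ifs <;> omega⟩
  have hnodup : [a, b, a', b'].Nodup := by
    simp only [List.nodup_cons, List.mem_cons, List.not_mem_nil, List.nodup_nil, or_false,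
      and_true, not_false_eq_true, Fin.ext_iff, a', b']
    split_ifs <;> omega
  refine ⟨[a, b, a', b'].toFinset, by rw [List.toFinset_card_of_nodup hnodup]; rfl, ?_⟩
  intro v hv
  simp only [List.mem_toFinset, List.mem_cons, List.not_mem_nil] at hv
  rcases hv with rfl | rfl | rfl | rfl | hv
  · exact Or.inl rfl
  · exact Or.inr (Or.inl rfl)
  · refine Or.inr (Or.inr (Or.inl ?_))
    simp only [cycleG_adj, a']
    split_ifs <;> omega
  · refine Or.inr (Or.inr (Or.inr ?_))
    simp only [cycleG_adj, b']
    split_ifs <;> omega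
  · exact hv.elim

lemma IsRestrictedMatching.cycleG_two_mul_card_sub_one_add_four_le (hn : 4 ≤ n)
    {M : Finset (Fin n × Fin n)} (hM : IsRestrictedMatching (cycleG n) M) :
    2 * (M.card - 1) + 4 ≤ n := by
  obtain ⟨hM, e, he, hgap⟩ := hM
  obtain ⟨T, hT4, hT⟩ := cycleG_exists_four_near_edge hn (hM.1 e he).1 (hM.1 e he).2
  simpa [hT4] using hM.two_mul_card_sub_one_add_card_le_of_formsGap he hgap hT

def consecutivePairs (s k : ℕ) (h : s + 2 * k ≤ n) : Finset (Fin n × Fin n) :=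
  Finset.univ.image fun i : Fin k => (⟨s + 2 * i, by omega⟩, ⟨s + 2 * i + 1, by omega⟩)

lemma mem_consecutivePairs {s k : ℕ} {h : s + 2 * k ≤ n} {p : Fin n × Fin n} :
    p ∈ consecutivePairs s k h ↔ ∃ i < k, (p.1 : ℕ) = s + 2 * i ∧ (p.2 : ℕ) = s + 2 * i + 1 := by
  simp only [consecutivePairs, Finset.mem_image, Finset.mem_univ, true_and, Prod.ext_iff,
    Fin.ext_iff]
  constructor
  · rintro ⟨i, h1, h2⟩
    exact ⟨i, i.isLt, h1.symm, h2.symm⟩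
  · rintro ⟨i, hi, h1, h2⟩
    exact ⟨⟨i, hi⟩, h1.symm, h2.symm⟩

lemma card_consecutivePairs (s k : ℕ) (h : s + 2 * k ≤ n) :
    (consecutivePairs s k h).card = k := by
  rw [consecutivePairs, Finset.card_image_of_injective, Finset.card_univ, Fintype.card_fin]
  intro i j hij
  simp only [Prod.mk.injEq, Fin.mk.injEq] at hij
  exact Fin.ext (by omega)

lemma isMatching_consecutivePairs (s k : ℕ) (h : s + 2 * k ≤ n) :
    IsMatching (cycleG n) (consecutivePairs s k h) := by
  refine ⟨fun p hp => ?_, fun p hp q hq hpq => ?_⟩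
  · obtain ⟨i, -, h1, h2⟩ := mem_consecutivePairs.mp hp
    exact ⟨cycleG_adj.mpr (by omega), Fin.lt_def.mpr (by omega)⟩
  · obtain ⟨i, -, hp1, hp2⟩ := mem_consecutivePairs.mp hp
    obtain ⟨j, -, hq1, hq2⟩ := mem_consecutivePairs.mp hq
    have hij : i ≠ j := by
      rintro rfl
      exact hpq (Prod.ext (Fin.ext (by omega)) (Fin.ext (by omega)))
    simp only [ne_eq, Fin.ext_iff]
    omega

lemma cycleG_exists_restrictedMatching (hn : 4 ≤ n) :
    ∃ M, IsRestrictedMatching (cycleG n) M ∧ M.card = n / 2 - 1 := by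
  let e : Fin n × Fin n := (⟨0, by omega⟩, ⟨1, by omega⟩)
  -- vertices `2` and `n - 1` stay unmatched, which separates `e` from the pairs from `3` on
  let P : Finset (Fin n × Fin n) := consecutivePairs 3 ((n - 4) / 2) (by omega)
  have hdisj : ∀ p ∈ P, e.1 ≠ p.1 ∧ e.1 ≠ p.2 ∧ e.2 ≠ p.1 ∧ e.2 ≠ p.2 := by
    intro p hp
    obtain ⟨i, -, h1, h2⟩ := mem_consecutivePairs.mp hp
    simp only [ne_eq, Fin.ext_iff, e]
    omega
  have heP : e ∉ P := fun he => (hdisj e he).1 rfl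
  refine ⟨insert e P, ⟨(isMatching_consecutivePairs _ _ _).insert
      (cycleG_adj.mpr (by simp [e])) (Fin.lt_def.mpr (by simp [e])) hdisj,
    e, Finset.mem_insert_self e P, fun p hp hpe => ?_⟩, ?_⟩
  · obtain ⟨i, hi, h1, h2⟩ := mem_consecutivePairs.mp ((Finset.mem_insert.mp hp).resolve_left hpe)
    rintro ⟨x, y, hxy, hxe, hxp⟩
    rw [cycleG_adj] at hxy
    simp only [meets, Fin.ext_iff, e] at hxe hxp
    omega
  · rw [Finset.card_insert_of_notMem heP, card_consecutivePairs]
    omega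

lemma matchNum_cycleG (n : ℕ) : matchNum (cycleG n) = n / 2 :=
  IsGreatest.csSup_eq ⟨⟨_, isMatching_consecutivePairs 0 (n / 2) (by omega),
    card_consecutivePairs _ _ _⟩, by
      rintro _ ⟨M, hM, rfl⟩
      have := hM.two_mul_card_le
      omega⟩

lemma resMatchNum_cycleG (hn : 4 ≤ n) : resMatchNum (cycleG n) = max (n / 2 - 1) 1 := by
  obtain ⟨M, hM, hcard⟩ := cycleG_exists_restrictedMatching hn
  have hmax : IsGreatest {k | ∃ M, IsRestrictedMatching (cycleG n) M ∧ M.card = k}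
      (n / 2 - 1) := ⟨⟨M, hM, hcard⟩, by
    rintro _ ⟨N, hN, rfl⟩
    have := hN.cycleG_two_mul_card_sub_one_add_four_le hn
    omega⟩
  rw [resMatchNum, hmax.csSup_eq]

end Cycle

theorem stmt19_general (n : ℕ) :
    matchNum (cycleG n) = n / 2 ∧
    (6 ≤ n → resMatchNum (cycleG n) = n / 2 - 1) ∧
    resMatchNum (cycleG 4) = 1 ∧ resMatchNum (cycleG 5) = 1 := by
  refine ⟨matchNum_cycleG n, fun h6 => ?_, resMatchNum_cycleG le_rfl,
    resMatchNum_cycleG (by norm_num)⟩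
  rw [resMatchNum_cycleG (by omega)]
  omega

/-- For the cycle `C_n` (`n > 3`): `ν(C_n) = ⌊n/2⌋`, and `ν₀(C_n) = ⌊n/2⌋ - 1` for
`n ≥ 6`, while `ν₀(C_4) = ν₀(C_5) = 1`. -/
theorem stmt19 (n : ℕ) (hn : 3 < n) :
    matchNum (cycleG n) = n / 2 ∧
    (6 ≤ n → resMatchNum (cycleG n) = n / 2 - 1) ∧
    resMatchNum (cycleG 4) = 1 ∧ resMatchNum (cycleG 5) = 1 :=
  stmt19_general n

end
end
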